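/- For sorted costs c_1 ≥ … ≥ c_n > 0 and k ≤ n/2, let V_k = c([2k])/2 be the value of Γ([n]^(k), 2^[n]). Then the value of Γ(2^[n], [n]^(k)) (Searcher restricted to k-subsets, Hider unrestricted) equals c([n]) − V_k, and this satisfies (c([n]) − V_k) − V_k = c([n]) − c([2k]) ≥ 0. -/

import Mathlib

open Finset

/-- Weighted symmetric-difference payoff `c(H Δ S)` (0-indexed locations). -/
def payoff (c : ℕ → ℝ) (H S : Finset ℕ) : ℝ := ∑ j ∈ (H \ S) ∪ (S \ H), c j

/-!
Since `c(H Δ S)` is additive over locations, the expected payoff of a mixed strategy depends only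
on its marginals. The Searcher plays the two halves `[0, k)` and `[k, 2k)` of `[2k]` with
probability `1/2` each: a location `j < 2k` is then missed with probability `1/2`, so the Hider
gains at most `c j / 2` there and at most `c j` elsewhere. The Hider puts each location `j` into
his set independently, with probability `(c j + t) / (2 c j)` if `j < 2k` and `1` otherwise, where
`t = c (2k - 1)` separates the `2k` largest costs from the others. Against a `k`-set `S` location
`j` then yields at least `c j - [j < 2k] (c j - t) / 2 - [j ∈ S] t`, and summing over `j` the
`k · t` gained below `2k` cancels the `k · t` lost on `S`.
-/

section ProductWeight

variable {ι : Type*} [DecidableEq ι]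

theorem sum_powerset_prod_ite {R : Type*} [CommSemiring R] (s : Finset ι) (f g : ι → R) :
    ∑ t ∈ s.powerset, ∏ i ∈ s, (if i ∈ t then f i else g i) = ∏ i ∈ s, (f i + g i) := by
  rw [prod_add]
  refine sum_congr rfl fun t ht => ?_
  rw [prod_ite, filter_mem_eq_inter, inter_eq_right.2 (mem_powerset.1 ht), filter_notMem_eq_sdiff]

def productWeight (s : Finset ι) (p : ι → ℝ) (A : Finset ι) : ℝ :=
  ∏ i ∈ s, if i ∈ A then p i else 1 - p i

variable {s : Finset ι} {p : ι → ℝ}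

theorem productWeight_nonneg (hp : ∀ i ∈ s, 0 ≤ p i ∧ p i ≤ 1) (A : Finset ι) :
    0 ≤ productWeight s p A :=
  prod_nonneg fun i hi => by split_ifs <;> linarith [hp i hi]

theorem sum_productWeight (s : Finset ι) (p : ι → ℝ) :
    ∑ A ∈ s.powerset, productWeight s p A = 1 := by
  simp [productWeight, sum_powerset_prod_ite]

theorem sum_productWeight_mul_ite_mem {j : ι} (hj : j ∈ s) :
    ∑ A ∈ s.powerset, productWeight s p A * (if j ∈ A then 1 else 0) = p j := by
  -- Replacing the factor `1 - p j` by `0` kills exactly the sets avoiding `j`.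
  have key := sum_powerset_prod_ite s p (Function.update (1 - p) j 0)
  have hterm : ∀ A ∈ s.powerset, productWeight s p A * (if j ∈ A then 1 else 0) =
      ∏ i ∈ s, (if i ∈ A then p i else Function.update (1 - p) j 0 i) := by
    intro A _
    by_cases hjA : j ∈ A
    · rw [if_pos hjA, mul_one, productWeight]
      refine prod_congr rfl fun i _ => ?_
      split_ifs with hiA
      · rfl
      · rw [Function.update_of_ne (by rintro rfl; exact hiA hjA), Pi.sub_apply, Pi.one_apply]
    · rw [if_neg hjA, mul_zero, eq_comm]
      exact prod_eq_zero hj (by simp [hjA])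
  rw [sum_congr rfl hterm, key, prod_eq_single_of_mem j hj fun i _ hij => by simp [hij]]
  simp

end ProductWeight

theorem payoff_eq_sum_ite {s H S : Finset ℕ} (c : ℕ → ℝ) (hH : H ⊆ s) (hS : S ⊆ s) :
    payoff c H S = ∑ j ∈ s, if j ∈ symmDiff H S then c j else 0 := by
  rw [sum_ite_mem, inter_eq_right.2 (symmDiff_subset_union.trans (union_subset hH hS))]
  rfl

theorem sum_productWeight_mul_payoff {s S : Finset ℕ} (p c : ℕ → ℝ) (hS : S ⊆ s) :
    ∑ A ∈ s.powerset, productWeight s p A * payoff c A S =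
      ∑ j ∈ s, c j * (if j ∈ S then 1 - p j else p j) := by
  have hcoord : ∀ A j, (if j ∈ symmDiff A S then c j else 0) =
      c j * (if j ∈ S then 1 - (if j ∈ A then 1 else 0) else (if j ∈ A then 1 else 0)) := by
    intro A j
    by_cases hjA : j ∈ A <;> by_cases hjS : j ∈ S <;> simp [mem_symmDiff, hjA, hjS]
  calc ∑ A ∈ s.powerset, productWeight s p A * payoff c A S
      = ∑ j ∈ s, ∑ A ∈ s.powerset,
          productWeight s p A * (if j ∈ symmDiff A S then c j else 0) := by
        rw [sum_comm]
        refine sum_congr rfl fun A hA => ?_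
        rw [payoff_eq_sum_ite c (mem_powerset.1 hA) hS, mul_sum]
    _ = _ := by
        refine sum_congr rfl fun j hj => ?_
        simp_rw [hcoord, mul_left_comm _ (c j), ← mul_sum]
        split_ifs
        · simp_rw [mul_sub, mul_one, sum_sub_distrib, sum_productWeight,
            sum_productWeight_mul_ite_mem hj]
          ring
        · rw [sum_productWeight_mul_ite_mem hj]

noncomputable def hiderMarginal (c : ℕ → ℝ) (m : ℕ) (t : ℝ) (j : ℕ) : ℝ :=
  if j < m then (c j + t) / (2 * c j) else 1

section Hider

variable {n k : ℕ} {c : ℕ → ℝ} {t : ℝ}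

theorem hiderMarginal_mem_Icc (hpos : ∀ j < n, 0 < c j) (ht : 0 ≤ t)
    (hlow : ∀ j < 2 * k, t ≤ c j) {j : ℕ} (hj : j < n) :
    0 ≤ hiderMarginal c (2 * k) t j ∧ hiderMarginal c (2 * k) t j ≤ 1 := by
  unfold hiderMarginal
  split_ifs with hjk
  · have hc := hpos j hj
    constructor
    · positivity
    · rw [div_le_one (by positivity)]
      linarith [hlow j hjk]
  · norm_num

theorem le_mul_hiderMarginal (hpos : ∀ j < n, 0 < c j)
    (hhigh : ∀ j, 2 * k ≤ j → j < n → c j ≤ t) (S : Finset ℕ) {j : ℕ} (hj : j < n) :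
    c j - (if j < 2 * k then (c j - t) / 2 else 0) - (if j ∈ S then t else 0) ≤
      c j * (if j ∈ S then 1 - hiderMarginal c (2 * k) t j else hiderMarginal c (2 * k) t j) := by
  have hc := (hpos j hj).ne'
  unfold hiderMarginal
  by_cases hjk : j < 2 * k <;> by_cases hjS : j ∈ S <;> simp only [hjk, hjS, if_true, if_false]
  · field_simp; linarith
  · field_simp; linarith
  · linarith [hhigh j (not_lt.1 hjk) hj]
  · simp

theorem sum_sub_half_le_sum_mul_hiderMarginal (hpos : ∀ j < n, 0 < c j)
    (hhigh : ∀ j, 2 * k ≤ j → j < n → c j ≤ t) (hkn : 2 * k ≤ n) {S : Finset ℕ}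
    (hS : S ⊆ range n) (hcard : S.card = k) :
    ∑ j ∈ range n, c j - (∑ j ∈ range (2 * k), c j) / 2 ≤
      ∑ j ∈ range n, c j *
        (if j ∈ S then 1 - hiderMarginal c (2 * k) t j else hiderMarginal c (2 * k) t j) := by
  have hfilter : (range n).filter (· < 2 * k) = range (2 * k) := by
    ext j; simp only [mem_filter, mem_range]; omega
  have hshift : ∑ j ∈ range n, (if j < 2 * k then (c j - t) / 2 else 0) =
      (∑ j ∈ range (2 * k), c j) / 2 - k * t := by
    rw [← sum_filter, hfilter, ← sum_div, sum_sub_distrib, sum_const, card_range, nsmul_eq_mul]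
    push_cast; ring
  have hpay : ∑ j ∈ range n, (if j ∈ S then t else 0) = k * t := by
    rw [sum_ite_mem, inter_eq_right.2 hS, sum_const, hcard, nsmul_eq_mul]
  calc ∑ j ∈ range n, c j - (∑ j ∈ range (2 * k), c j) / 2
      = ∑ j ∈ range n, (c j - (if j < 2 * k then (c j - t) / 2 else 0) -
          (if j ∈ S then t else 0)) := by
        rw [sum_sub_distrib, sum_sub_distrib, hshift, hpay]; ring
    _ ≤ _ := sum_le_sum fun j hj => le_mul_hiderMarginal hpos hhigh S (mem_range.1 hj)

end Hider

theorem payoff_add_payoff_le {s H S T : Finset ℕ} {c : ℕ → ℝ} (hc : ∀ j ∈ s, 0 ≤ c j)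
    (hH : H ⊆ s) (hST : Disjoint S T) (hsub : S ∪ T ⊆ s) :
    payoff c H S + payoff c H T ≤ 2 * ∑ j ∈ s, c j - ∑ j ∈ S ∪ T, c j := by
  have hS := subset_union_left.trans hsub
  have hT := subset_union_right.trans hsub
  rw [payoff_eq_sum_ite c hH hS, payoff_eq_sum_ite c hH hT, ← sum_add_distrib, mul_sum,
    ← inter_eq_right.2 hsub, ← sum_ite_mem, ← sum_sub_distrib]
  refine sum_le_sum fun j hj => ?_
  have := hc j hj
  have hdisj : j ∈ S → j ∉ T := fun h => disjoint_left.1 hST h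
  by_cases hjH : j ∈ H <;> by_cases hjS : j ∈ S <;> by_cases hjT : j ∈ T <;>
    simp_all [mem_symmDiff] <;> linarith

theorem payoff_range_add_payoff_Ico_le {n k : ℕ} {H : Finset ℕ} {c : ℕ → ℝ}
    (hc : ∀ j ∈ range n, 0 ≤ c j) (hkn : 2 * k ≤ n) (hH : H ⊆ range n) :
    payoff c H (range k) + payoff c H (Ico k (2 * k)) ≤
      2 * ∑ j ∈ range n, c j - ∑ j ∈ range (2 * k), c j := by
  have hdisj : Disjoint (range k) (Ico k (2 * k)) := by
    rw [range_eq_Ico]; exact Ico_disjoint_Ico_consecutive 0 k (2 * k)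
  have hunion : range k ∪ Ico k (2 * k) = range (2 * k) := by
    rw [range_eq_Ico, range_eq_Ico, Ico_union_Ico_eq_Ico (Nat.zero_le k) (by omega)]
  have := payoff_add_payoff_le hc hH hdisj (hunion ▸ range_subset_range.2 hkn)
  rwa [hunion] at this

theorem sum_ite_add_ite_mul {α : Type*} [DecidableEq α] {F : Finset α} {a b : α} (ha : a ∈ F)
    (hb : b ∈ F) (x y : ℝ) (f : α → ℝ) :
    ∑ S ∈ F, ((if S = a then x else 0) + (if S = b then y else 0)) * f S = x * f a + y * f b := by
  simp only [add_mul, ite_mul, zero_mul, sum_add_distrib, sum_ite_eq', ha, hb, if_true]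

theorem stmt_16 (n k : ℕ) (c : ℕ → ℝ)
    (hpos : ∀ i < n, 0 < c i)
    (hsort : ∀ i j, i ≤ j → j < n → c j ≤ c i)
    (hk : 1 ≤ k) (hkn : 2*k ≤ n) :
    let total : ℝ := ∑ i ∈ Finset.range n, c i
    let Vk : ℝ := (∑ i ∈ Finset.range (2*k), c i) / 2
    -- the game Γ(2^[n],[n]^(k)) has value total - Vk:
    -- a Hider mixed strategy (over all subsets of [n]) guaranteeing ≥ total - Vk
    (∃ w : Finset ℕ → ℝ, (∀ A, 0 ≤ w A) ∧
      (∑ A ∈ (Finset.range n).powerset, w A) = 1 ∧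
      ∀ S ⊆ Finset.range n, S.card = k →
        total - Vk ≤ ∑ A ∈ (Finset.range n).powerset, w A * payoff c A S) ∧
    -- a Searcher mixed strategy over k-subsets guaranteeing ≤ total - Vk
    (∃ u : Finset ℕ → ℝ, (∀ A, 0 ≤ u A) ∧
      (∑ S ∈ (Finset.range n).powerset.filter (fun S => S.card = k), u S) = 1 ∧
      ∀ H ⊆ Finset.range n,
        ∑ S ∈ (Finset.range n).powerset.filter (fun S => S.card = k),
            u S * payoff c H S ≤ total - Vk) ∧
    -- and this value exceeds Vk by c([n]) - c([2k]) ≥ 0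
    ((total - Vk) - Vk = total - ∑ i ∈ Finset.range (2*k), c i) ∧
    (0 ≤ total - ∑ i ∈ Finset.range (2*k), c i) := by
  dsimp only
  set t := c (2 * k - 1)
  have ht : 0 ≤ t := (hpos _ (by omega)).le
  have hlow : ∀ j < 2 * k, t ≤ c j := fun j hj => hsort j _ (by omega) (by omega)
  have hhigh : ∀ j, 2 * k ≤ j → j < n → c j ≤ t := fun j hj hjn => hsort _ j (by omega) hjn
  have hc : ∀ j ∈ range n, 0 ≤ c j := fun j hj => (hpos j (mem_range.1 hj)).le
  have hlowHalf : range k ∈ (range n).powerset.filter (fun S => S.card = k) :=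
    mem_filter.2 ⟨mem_powerset.2 (range_subset_range.2 (by omega)), card_range k⟩
  have hhighHalf : Ico k (2 * k) ∈ (range n).powerset.filter (fun S => S.card = k) :=
    mem_filter.2 ⟨mem_powerset.2 fun j hj => mem_range.2 (by rw [mem_Ico] at hj; omega),
      by rw [Nat.card_Ico]; omega⟩
  refine ⟨⟨productWeight (range n) (hiderMarginal c (2 * k) t),
      productWeight_nonneg fun j hj => hiderMarginal_mem_Icc hpos ht hlow (mem_range.1 hj),
      sum_productWeight _ _, fun S hS hcard => ?_⟩,
    ⟨fun S => (if S = range k then 1 / 2 else 0) + (if S = Ico k (2 * k) then 1 / 2 else 0),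
      fun S => by positivity, ?_, fun H hH => ?_⟩, by ring, ?_⟩
  · rw [sum_productWeight_mul_payoff _ _ hS]
    exact sum_sub_half_le_sum_mul_hiderMarginal hpos hhigh hkn hS hcard
  · have := sum_ite_add_ite_mul hlowHalf hhighHalf (1 / 2) (1 / 2) 1
    simp only [Pi.one_apply, mul_one] at this
    rw [this]; norm_num
  · rw [sum_ite_add_ite_mul hlowHalf hhighHalf]
    linarith [payoff_range_add_payoff_Ico_le hc hkn hH]
  · linarith [sum_le_sum_of_subset_of_nonneg (range_subset_range.2 hkn)
      fun j hj _ => hc j hj]
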